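/- arXiv:1809.10750 — 4 statements merged into one kernel-verified Lean document; each statement's English description precedes it below -/
import Mathlib

section
/- Let G be an abelian topological group and A, K ⊂ G arbitrary subsets. Then int(A) \ ∂^K A ⊂ {x ∈ int(A) : (−K) + x ⊂ int(A)}, where ∂^K A = ((K + cl(A)) ∩ cl(Aᶜ)) ∪ ((K + cl(Aᶜ)) ∩ cl(A)). -/
open Set Pointwise

theorem neg_add_mem_interior_of_notMem_add_closure_compl {G : Type*} [AddGroup G]
    [TopologicalSpace G] {A K : Set G} {x k : G} (hx : x ∉ K + closure Aᶜ) (hk : k ∈ K) :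
    -k + x ∈ interior A := by
  by_contra h
  exact hx ⟨k, hk, -k + x, by rwa [closure_compl], add_neg_cancel_left k x⟩

theorem stmt8_general {G : Type*} [AddCommGroup G] [TopologicalSpace G]
    (A K : Set G) :
    interior A \ (((K + closure A) ∩ closure Aᶜ) ∪ ((K + closure Aᶜ) ∩ closure A))
      ⊆ {x : G | x ∈ interior A ∧ ∀ k ∈ K, -k + x ∈ interior A} := by
  rintro x ⟨hx, hx_boundary⟩
  refine ⟨hx, fun k hk => neg_add_mem_interior_of_notMem_add_closure_compl ?_ hk⟩
  exact fun hxK => hx_boundary (Or.inr ⟨hxK, subset_closure (interior_subset hx)⟩)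

/-- int(A) \ ∂^K A ⊆ {x ∈ int(A) : −K + x ⊆ int(A)}. -/
theorem stmt8 {G : Type*} [AddCommGroup G] [TopologicalSpace G] [IsTopologicalAddGroup G]
    (A K : Set G) :
    interior A \ (((K + closure A) ∩ closure Aᶜ) ∪ ((K + closure Aᶜ) ∩ closure A))
      ⊆ {x : G | x ∈ interior A ∧ ∀ k ∈ K, -k + x ∈ interior A} :=
  stmt8_general A K
end

section
/- Let G be an abelian topological group and A, K, L ⊂ G arbitrary subsets. Then L + ∂^K A ⊂ ∂^{L+K} A ∪ ∂^L A, where ∂^M A = ((M + cl(A)) ∩ cl(Aᶜ)) ∪ ((M + cl(Aᶜ)) ∩ cl(A)). -/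
open Set Pointwise

/-! Since `closure A ∪ closure Aᶜ` covers `G`, a point `l + (k + a)` of `L + ((K + closure A) ∩ closure Aᶜ)`
either lies in `closure Aᶜ`, and then in `∂^{L+K} A` by associativity, or in `closure A`, and then in
`∂^L A` because `k + a ∈ closure Aᶜ`. The other half of `∂^K A` is symmetric. -/

theorem Set.add_inter_subset_of_union_eq_univ {α : Type*} [Add α] {P Q : Set α}
    (hPQ : P ∪ Q = univ) (L S : Set α) :
    L + (S ∩ Q) ⊆ ((L + S) ∩ Q) ∪ ((L + Q) ∩ P) := by
  intro x hx
  have hLS : x ∈ L + S := add_subset_add_left inter_subset_left hx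
  have hLQ : x ∈ L + Q := add_subset_add_left inter_subset_right hx
  rcases (hPQ ▸ mem_univ x : x ∈ P ∪ Q) with hP | hQ
  · exact Or.inr ⟨hLQ, hP⟩
  · exact Or.inl ⟨hLS, hQ⟩

theorem closure_union_closure_compl {X : Type*} [TopologicalSpace X] (A : Set X) :
    closure A ∪ closure Aᶜ = univ := by
  rw [← closure_union, union_compl_self, closure_univ]

theorem stmt10_general {G : Type*} [AddCommGroup G] [TopologicalSpace G]
    (A K L : Set G) :
    L + (((K + closure A) ∩ closure Aᶜ) ∪ ((K + closure Aᶜ) ∩ closure A))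
      ⊆ ((((L + K) + closure A) ∩ closure Aᶜ) ∪ (((L + K) + closure Aᶜ) ∩ closure A)) ∪
        (((L + closure A) ∩ closure Aᶜ) ∪ ((L + closure Aᶜ) ∩ closure A)) := by
  have hcover := closure_union_closure_compl A
  rw [add_union, add_assoc, add_assoc]
  refine union_subset ((add_inter_subset_of_union_eq_univ hcover L _).trans ?_)
    ((add_inter_subset_of_union_eq_univ (union_comm _ _ ▸ hcover) L _).trans ?_) <;> tauto_set

/-- L + ∂^K A ⊆ ∂^{L+K} A ∪ ∂^L A. -/
theorem stmt10 {G : Type*} [AddCommGroup G] [TopologicalSpace G] [IsTopologicalAddGroup G]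
    (A K L : Set G) :
    L + (((K + closure A) ∩ closure Aᶜ) ∪ ((K + closure Aᶜ) ∩ closure A))
      ⊆ ((((L + K) + closure A) ∩ closure Aᶜ) ∪ (((L + K) + closure Aᶜ) ∩ closure A)) ∪
        (((L + closure A) ∩ closure Aᶜ) ∪ ((L + closure Aᶜ) ∩ closure A)) :=
  stmt10_general A K L
end

section
/- Let G be a σ-compact locally compact abelian group with Haar measure θ_G, let (A_n) be a van Hove sequence in G, and let Λ ⊂ G be uniformly discrete with counting measure δ_Λ. Suppose α ≥ 0 and δ_Λ ⪯ α θ_G in the sense that for every ε > 0 there is a compact K ⊂ G with (1−ε) δ_Λ(A) ≤ α θ_G(K + A) for all compact A ⊂ G. Then the upper Banach density satisfies D⁺_𝒜(Λ) = limsup_n sup_{t∈G} card(Λ ∩ (A_n + t))/θ_G(A_n) ≤ α. -/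
open MeasureTheory Set Filter Pointwise Topology

/-!
A translate `A + t` of a compact set carries at most `α/a · μ(K + A)` points of `Λ` once
`a · δ_Λ ≤ α μ(K + ·)`, by translation invariance of `μ`. The enlargement `K + A` exceeds `A`
only inside the van Hove boundary `∂^K A`, whose relative measure vanishes along the sequence,
so the upper density is at most `α / a` for every `a < 1`.
-/

def vanHoveBoundary {G : Type*} [Add G] [TopologicalSpace G] (K A : Set G) : Set G :=
  ((K + closure A) ∩ closure Aᶜ) ∪ ((K + closure Aᶜ) ∩ closure A)

section VanHove

variable {G : Type*} [Add G] [TopologicalSpace G]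

lemma add_subset_union_vanHoveBoundary (K A : Set G) : K + A ⊆ A ∪ vanHoveBoundary K A := by
  rintro _ ⟨k, hk, a, ha, rfl⟩
  by_cases hka : k + a ∈ A
  · exact Or.inl hka
  · exact Or.inr (Or.inl ⟨⟨k, hk, a, subset_closure ha, rfl⟩, subset_closure hka⟩)

lemma measure_add_div_le_one_add_vanHoveBoundary [MeasurableSpace G] (μ : Measure G)
    (K A : Set G) (h₀ : μ A ≠ 0) (h_top : μ A ≠ ⊤) :
    μ (K + A) / μ A ≤ 1 + μ (vanHoveBoundary K A) / μ A :=
  calc μ (K + A) / μ A ≤ (μ A + μ (vanHoveBoundary K A)) / μ A := by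
        gcongr
        exact (measure_mono (add_subset_union_vanHoveBoundary K A)).trans (measure_union_le _ _)
    _ = 1 + μ (vanHoveBoundary K A) / μ A := by rw [ENNReal.add_div, ENNReal.div_self h₀ h_top]

lemma limsup_mul_measure_add_div_le [MeasurableSpace G] (μ : Measure G) (A : ℕ → Set G)
    (K : Set G) (c : ENNReal)
    (h₀ : ∀ n, μ (A n) ≠ 0) (h_top : ∀ n, μ (A n) ≠ ⊤)
    (hK : Tendsto (fun n => μ (vanHoveBoundary K (A n)) / μ (A n)) atTop (𝓝 0)) :
    limsup (fun n => c * (μ (K + A n) / μ (A n))) atTop ≤ c := by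
  have hlim :
      Tendsto (fun n => c * (1 + μ (vanHoveBoundary K (A n)) / μ (A n))) atTop (𝓝 c) := by
    have h₁ : Tendsto (fun n => 1 + μ (vanHoveBoundary K (A n)) / μ (A n)) atTop (𝓝 1) := by
      simpa using tendsto_const_nhds.add hK
    simpa using ENNReal.Tendsto.const_mul h₁ (.inl one_ne_zero)
  calc limsup (fun n => c * (μ (K + A n) / μ (A n))) atTop
      ≤ limsup (fun n => c * (1 + μ (vanHoveBoundary K (A n)) / μ (A n))) atTop :=
        limsup_le_limsup (Eventually.of_forall fun n => mul_le_mul_right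
          (measure_add_div_le_one_add_vanHoveBoundary μ K (A n) (h₀ n) (h_top n)) c)
    _ = c := hlim.limsup_eq

end VanHove

lemma ncard_inter_image_add_right_le {G : Type*} [AddCommGroup G] [TopologicalSpace G]
    [ContinuousAdd G] [MeasurableSpace G] [MeasurableAdd G]
    (μ : Measure G) [μ.IsAddLeftInvariant] (Λ K : Set G) {a α : ENNReal}
    (hK : ∀ C : Set G, IsCompact C → a * ((Λ ∩ C).ncard : ENNReal) ≤ α * μ (K + C))
    {A : Set G} (hA : IsCompact A) (t : G) :
    a * ((Λ ∩ ((· + t) '' A)).ncard : ENNReal) ≤ α * μ (K + A) := by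
  have hshift : K + (· + t) '' A = (· + -t) ⁻¹' (K + A) := by
    rw [← add_singleton, ← add_assoc, add_singleton, image_add_right]
  calc a * ((Λ ∩ ((· + t) '' A)).ncard : ENNReal)
      ≤ α * μ (K + (· + t) '' A) := hK _ (hA.image (continuous_add_const t))
    _ = α * μ (K + A) := by rw [hshift, measure_preimage_add_right]

theorem stmt16_general {G : Type*} [AddCommGroup G] [TopologicalSpace G] [IsTopologicalAddGroup G]
    [MeasurableSpace G] [BorelSpace G]
    (μ : Measure G) [μ.IsAddHaarMeasure]
    (A : ℕ → Set G) (hAc : ∀ n, IsCompact (A n)) (hApos : ∀ n, 0 < μ (A n))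
    -- van Hove property
    (hvH : ∀ K : Set G, IsCompact K →
      Tendsto (fun n =>
        μ (((K + closure (A n)) ∩ closure (A n)ᶜ) ∪ ((K + closure (A n)ᶜ) ∩ closure (A n)))
          / μ (A n)) atTop (nhds 0))
    (Λ : Set G)
    (α : ENNReal)
    -- δ_Λ ⪯ α θ_G
    (hle : ∀ ε : ENNReal, 0 < ε → ε < 1 → ∃ K : Set G, IsCompact K ∧
      ∀ C : Set G, IsCompact C → (1 - ε) * ((Λ ∩ C).ncard : ENNReal) ≤ α * μ (K + C)) :
    Filter.limsup
      (fun n => ⨆ t : G, ((Λ ∩ ((· + t) '' A n)).ncard : ENNReal) / μ (A n)) atTop ≤ α := by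
  refine ENNReal.le_of_forall_lt_one_mul_le fun a ha => ?_
  rcases eq_or_ne a 0 with rfl | ha₀
  · simp
  obtain ⟨K, hKc, hK⟩ :=
    hle (1 - a) (tsub_pos_of_lt ha) (ENNReal.sub_lt_self ENNReal.one_ne_top one_ne_zero ha₀)
  rw [ENNReal.sub_sub_cancel ENNReal.one_ne_top ha.le] at hK
  have hcount : ∀ n t, ((Λ ∩ ((· + t) '' A n)).ncard : ENNReal) / μ (A n)
      ≤ α / a * (μ (K + A n) / μ (A n)) := fun n t => by
    rw [← mul_div_assoc]
    gcongr
    rw [← ENNReal.mul_div_right_comm, ENNReal.le_div_iff_mul_le (.inl ha₀) (.inl ha.ne_top)]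
    exact (mul_comm _ _).trans_le (ncard_inter_image_add_right_le μ Λ K hK (hAc n) t)
  calc a * limsup (fun n => ⨆ t : G, ((Λ ∩ ((· + t) '' A n)).ncard : ENNReal) / μ (A n)) atTop
      ≤ a * (α / a) := by
        gcongr
        exact (limsup_le_limsup (Eventually.of_forall fun n => iSup_le (hcount n))).trans
          (limsup_mul_measure_add_div_le μ A K _ (fun n => (hApos n).ne')
            (fun n => (hAc n).measure_lt_top.ne) (hvH K hKc))
    _ ≤ α := ENNReal.mul_div_le

/-- If δ_Λ ⪯ α θ_G, then the upper Banach density of Λ along any van Hove sequence is ≤ α. -/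
theorem stmt16 {G : Type*} [AddCommGroup G] [TopologicalSpace G] [IsTopologicalAddGroup G]
    [LocallyCompactSpace G] [SigmaCompactSpace G] [MeasurableSpace G] [BorelSpace G]
    (μ : Measure G) [μ.IsAddHaarMeasure]
    (A : ℕ → Set G) (hAc : ∀ n, IsCompact (A n)) (hApos : ∀ n, 0 < μ (A n))
    -- van Hove property
    (hvH : ∀ K : Set G, IsCompact K →
      Tendsto (fun n =>
        μ (((K + closure (A n)) ∩ closure (A n)ᶜ) ∪ ((K + closure (A n)ᶜ) ∩ closure (A n)))
          / μ (A n)) atTop (nhds 0))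
    (Λ : Set G)
    (hΛ : ∃ B : Set G, IsCompact B ∧ B ∈ nhds (0 : G) ∧
      ∀ x : G, (Λ ∩ ((x + ·) '' B)).Subsingleton)
    (α : ENNReal)
    -- δ_Λ ⪯ α θ_G
    (hle : ∀ ε : ENNReal, 0 < ε → ε < 1 → ∃ K : Set G, IsCompact K ∧
      ∀ C : Set G, IsCompact C → (1 - ε) * ((Λ ∩ C).ncard : ENNReal) ≤ α * μ (K + C)) :
    Filter.limsup
      (fun n => ⨆ t : G, ((Λ ∩ ((· + t) '' A n)).ncard : ENNReal) / μ (A n)) atTop ≤ α :=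
  stmt16_general μ A hAc hApos hvH Λ α hle
end

section
/- Let (G,H,𝓛) be a cut-and-project scheme where 𝓛 projects injectively to G and densely to H, and let W ⊂ H be relatively compact with nonempty interior. Then the model set Λ_W = π_G(𝓛 ∩ (G × W)) is relatively dense in G: there is a compact set C ⊂ G with Λ_W + C = G. -/
/-!
Cocompactness of `L` gives a compact `K ⊆ G × H` with `K + L = G × H`, so every `g ∈ G` is
`k.1 + l.1` with `k ∈ K`, `l ∈ L` and `l.2 = -k.2`. By density of `π_H(L)`, finitely many lattice
points `m` cover the compact set `π_H(K)` by translates `m.2 - int W`; then `l + m ∈ L` has its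
`H`-coordinate in `W`, and `g = (l + m).1 + (k.1 - m.1)`. Hence `C = π_G(K) - {m.1}` works.
-/

open Set Pointwise

theorem IsOpenMap.exists_isCompact_image_eq_univ {X Y : Type*} [TopologicalSpace X]
    [TopologicalSpace Y] [WeaklyLocallyCompactSpace X] [CompactSpace Y] {f : X → Y}
    (hf : IsOpenMap f) (hsurj : Function.Surjective f) :
    ∃ K : Set X, IsCompact K ∧ f '' K = univ := by
  choose N hNc hNx using fun x : X => exists_compact_mem_nhds x
  have hcover : univ ⊆ ⋃ x, f '' interior (N x) := fun y _ => by
    obtain ⟨x, rfl⟩ := hsurj y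
    exact mem_iUnion.2 ⟨x, mem_image_of_mem f (mem_interior_iff_mem_nhds.2 (hNx x))⟩
  obtain ⟨t, ht⟩ := isCompact_univ.elim_finite_subcover _ (fun x => hf _ isOpen_interior) hcover
  refine ⟨⋃ x ∈ t, N x, t.isCompact_biUnion fun x _ => hNc x, eq_univ_of_univ_subset ?_⟩
  refine ht.trans (iUnion₂_subset fun x hx => ?_)
  exact image_mono (interior_subset.trans (subset_biUnion_of_mem (u := N) hx))

@[to_additive]
theorem Subgroup.exists_isCompact_mul_eq_univ {G : Type*} [Group G] [TopologicalSpace G]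
    [IsTopologicalGroup G] [WeaklyLocallyCompactSpace G] (N : Subgroup G)
    [CompactSpace (G ⧸ N)] : ∃ K : Set G, IsCompact K ∧ K * (N : Set G) = univ := by
  obtain ⟨K, hK, hKN⟩ := QuotientGroup.isOpenMap_coe.exists_isCompact_image_eq_univ
    (QuotientGroup.mk_surjective (s := N))
  refine ⟨K, hK, eq_univ_of_forall fun x => ?_⟩
  obtain ⟨k, hk, hkx⟩ := hKN.symm ▸ mem_univ (x : G ⧸ N)
  exact ⟨k, hk, k⁻¹ * x, QuotientGroup.eq.1 hkx, mul_inv_cancel_left k x⟩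

@[to_additive]
theorem IsCompact.exists_finset_subset_iUnion_smul_of_denseRange {G ι : Type*} [Group G]
    [TopologicalSpace G] [IsTopologicalGroup G] {f : ι → G} (hf : DenseRange f) {K U : Set G}
    (hK : IsCompact K) (hU : IsOpen U) (hne : U.Nonempty) :
    ∃ t : Finset ι, K ⊆ ⋃ i ∈ t, f i • U := by
  refine hK.elim_finite_subcover (fun i => f i • U) (fun i => hU.smul (f i)) fun x _ => ?_
  obtain ⟨u, hu⟩ := hne
  obtain ⟨i, v, hv, hiv⟩ := hf.exists_mem_open (hU.inv.smul x)
    ⟨x * u⁻¹, u⁻¹, inv_mem_inv.2 hu, rfl⟩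
  refine mem_iUnion.2 ⟨i, v⁻¹, hv, ?_⟩
  simp [← hiv]

theorem stmt19_general {G H : Type*}
    [AddCommGroup G] [TopologicalSpace G] [IsTopologicalAddGroup G] [LocallyCompactSpace G]
    [AddCommGroup H] [TopologicalSpace H] [IsTopologicalAddGroup H] [LocallyCompactSpace H]
    (L : AddSubgroup (G × H)) [CompactSpace ((G × H) ⧸ L)]
    (hdense : Dense (Prod.snd '' (L : Set (G × H))))
    (W : Set H) (hWi : (interior W).Nonempty) :
    ∃ C : Set G, IsCompact C ∧
      (Prod.fst '' ((L : Set (G × H)) ∩ (Set.univ ×ˢ W))) + C = Set.univ := by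
  obtain ⟨K, hK, hKL⟩ := L.exists_isCompact_add_eq_univ
  have hLH : DenseRange fun l : L => (l : G × H).2 := by
    change Dense (range (Prod.snd ∘ ((↑) : L → G × H)))
    rwa [range_comp, Subtype.range_coe]
  obtain ⟨t, ht⟩ := (hK.image continuous_snd).exists_finset_subset_iUnion_vadd_of_denseRange
    hLH isOpen_interior.neg hWi.neg
  refine ⟨Prod.fst '' K + (fun m : L => -(m : G × H).1) '' t,
    (hK.image continuous_fst).add (t.finite_toSet.image _).isCompact, eq_univ_of_forall fun g => ?_⟩
  obtain ⟨k, hk, l, hl, hkl⟩ := hKL.symm ▸ mem_univ (g, (0 : H))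
  obtain ⟨m, hm, u, hu, hku⟩ := mem_iUnion₂.1 (ht (mem_image_of_mem Prod.snd hk))
  beta_reduce at hkl hku
  obtain ⟨rfl, hsnd⟩ := Prod.ext_iff.1 hkl
  have hlm : (l + m).2 = -u := by
    rw [Prod.snd_add, ← hku, vadd_eq_add] at hsnd
    rw [Prod.snd_add, eq_neg_of_add_eq_zero_right hsnd]
    abel
  refine ⟨(l + m).1, ⟨l + m, ⟨L.add_mem hl m.2, trivial, hlm ▸ interior_subset hu⟩, rfl⟩,
    k.1 + -(m : G × H).1, add_mem_add (mem_image_of_mem _ hk) (mem_image_of_mem _ hm), ?_⟩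
  simp only [Prod.fst_add]
  abel

/-- For a cut-and-project scheme (G, H, 𝓛) (𝓛 projects injectively to G, densely to H)
and a relatively compact window W with nonempty interior, the model set
Λ_W = π_G(𝓛 ∩ (G × W)) is relatively dense in G. -/
theorem stmt19 {G H : Type*}
    [AddCommGroup G] [TopologicalSpace G] [IsTopologicalAddGroup G] [LocallyCompactSpace G]
    [AddCommGroup H] [TopologicalSpace H] [IsTopologicalAddGroup H] [LocallyCompactSpace H]
    (L : AddSubgroup (G × H)) [DiscreteTopology L] [CompactSpace ((G × H) ⧸ L)]
    (hinj : ∀ p ∈ L, ∀ q ∈ L, (p : G × H).1 = (q : G × H).1 → p = q)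
    (hdense : Dense (Prod.snd '' (L : Set (G × H))))
    (W : Set H) (hWc : IsCompact (closure W)) (hWi : (interior W).Nonempty) :
    ∃ C : Set G, IsCompact C ∧
      (Prod.fst '' ((L : Set (G × H)) ∩ (Set.univ ×ˢ W))) + C = Set.univ :=
  stmt19_general L hdense W hWi
end
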